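/- arXiv:1401.2653 — 4 statements merged into one kernel-verified Lean document; each statement's English description precedes it below -/
import Mathlib

section
/- Let X be a normed linear space and let A, B be convex bounded subsets of X. Then for every bounded subset C of X, the Hausdorff distance satisfies d_H(A + C, B + C) = d_H(A, B), where + denotes the Minkowski sum. -/
/-!
Rådström cancellation: if `a + C ⊆ D + C` with `C` bounded, iterating gives
`(n + 1) • a + c₀ ∈ (n + 1) • D + C`, where convexity of `D` identifies the Minkowski sum of
`n + 1` copies of `D` with `(n + 1) • D`; hence `a` is within `diam C / (n + 1)` of `D`.
Applied to `D` a thickening of `B`, this turns `A + C ⊆ cthickening r (B + C)` into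
`A ⊆ cthickening r B`, which is the nontrivial inequality between the Hausdorff distances.
-/

open Metric Pointwise

section

variable {X : Type*} [SeminormedAddCommGroup X]

theorem thickening_add (δ : ℝ) (B C : Set X) : thickening δ (B + C) = thickening δ B + C := by
  rw [← add_ball_zero, ← add_ball_zero, add_right_comm]

theorem hausdorffEDist_add_le (A B C : Set X) :
    hausdorffEDist (A + C) (B + C) ≤ hausdorffEDist A B := by
  have key : ∀ {A B : Set X}, ∀ x ∈ A + C, infEDist x (B + C) ≤ hausdorffEDist A B := by
    rintro A B _ ⟨a, ha, c, hc, rfl⟩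
    calc infEDist (a + c) (B + C) ≤ infEDist (c +ᵥ a) (c +ᵥ B) := by
          rw [vadd_eq_add, add_comm a, add_comm B]
          exact infEDist_anti (Set.vadd_set_subset_add hc)
      _ = infEDist a B := infEDist_vadd c a B
      _ ≤ hausdorffEDist A B := infEDist_le_hausdorffEDist_of_mem ha
  exact hausdorffEDist_le_of_infEDist key fun x hx => hausdorffEDist_comm (s := A) ▸ key x hx

variable [NormedSpace ℝ X] {a c₀ : X} {A B C D : Set X}

theorem Convex.natCast_add_one_smul_add_mem (hD : Convex ℝ D)
    (h : ∀ c ∈ C, a + c ∈ D + C) (hc₀ : c₀ ∈ C) (n : ℕ) :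
    ((n : ℝ) + 1) • a + c₀ ∈ ((n : ℝ) + 1) • D + C := by
  induction n with
  | zero => simpa using h c₀ hc₀
  | succ n ih =>
    obtain ⟨_, ⟨d, hd, rfl⟩, c, hc, hsum⟩ := ih
    obtain ⟨d', hd', c', hc', hsum'⟩ := h c hc
    beta_reduce at hsum hsum'
    have hD' : ((n : ℝ) + 1) • d + d' ∈ ((n + 1 : ℕ) + 1 : ℝ) • D := by
      rw [Nat.cast_succ, hD.add_smul (by positivity) zero_le_one, one_smul]
      exact Set.add_mem_add (Set.smul_mem_smul_set hd) hd'
    refine ⟨_, hD', c', hc', ?_⟩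
    calc ((n : ℝ) + 1) • d + d' + c' = a + (((n : ℝ) + 1) • d + c) := by
          rw [add_assoc, hsum']; abel
      _ = (((n + 1 : ℕ) : ℝ) + 1) • a + c₀ := by rw [hsum]; push_cast; module

theorem Convex.mem_closure_of_forall_add_mem_add (hD : Convex ℝ D)
    (hC : Bornology.IsBounded C) (hCne : C.Nonempty) (h : ∀ c ∈ C, a + c ∈ D + C) :
    a ∈ closure D := by
  obtain ⟨c₀, hc₀⟩ := hCne
  refine Metric.mem_closure_iff.2 fun ε hε => ?_
  obtain ⟨n, hn⟩ := exists_nat_gt (diam C / ε)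
  obtain ⟨_, ⟨d, hd, rfl⟩, c, hc, hsum⟩ := hD.natCast_add_one_smul_add_mem h hc₀ n
  beta_reduce at hsum
  refine ⟨d, hd, ?_⟩
  have hpos : (0 : ℝ) < n + 1 := by positivity
  have hdiff : a - d = ((n : ℝ) + 1)⁻¹ • (c - c₀) := by
    rw [eq_inv_smul_iff₀ hpos.ne', smul_sub, sub_eq_sub_iff_add_eq_add, ← hsum]; abel
  calc dist a d = dist c c₀ / ((n : ℝ) + 1) := by
        rw [dist_eq_norm, hdiff, norm_smul, Real.norm_of_nonneg (by positivity), ← dist_eq_norm,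
          inv_mul_eq_div]
    _ ≤ diam C / ((n : ℝ) + 1) := by gcongr; exact dist_le_diam_of_mem hC hc hc₀
    _ < ε := by rw [div_lt_iff₀ hpos]; rw [div_lt_iff₀ hε] at hn; linarith

theorem Convex.subset_closure_of_add_subset_add (hD : Convex ℝ D)
    (hC : Bornology.IsBounded C) (hCne : C.Nonempty) (h : A + C ⊆ D + C) : A ⊆ closure D :=
  fun _ ha => hD.mem_closure_of_forall_add_mem_add hC hCne fun _ hc => h (Set.add_mem_add ha hc)

theorem Convex.subset_cthickening_of_add_subset_cthickening_add {δ : ℝ} (hδ : 0 ≤ δ)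
    (hB : Convex ℝ B) (hC : Bornology.IsBounded C) (hCne : C.Nonempty)
    (h : A + C ⊆ Metric.cthickening δ (B + C)) : A ⊆ Metric.cthickening δ B := by
  rw [cthickening_eq_iInter_cthickening]
  refine Set.subset_iInter₂ fun ε hε => ?_
  have hε' : A + C ⊆ Metric.thickening ε B + C := by
    rw [← thickening_add]
    exact h.trans (cthickening_subset_thickening' (hδ.trans_lt hε) hε _)
  exact ((hB.thickening ε).subset_closure_of_add_subset_add hC hCne hε').trans
    (closure_thickening_subset_cthickening ε B)

theorem Convex.infEDist_le_hausdorffEDist_add (hB : Convex ℝ B) (hC : Bornology.IsBounded C)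
    (hCne : C.Nonempty) (ha : a ∈ A) : infEDist a B ≤ hausdorffEDist (A + C) (B + C) := by
  set r := hausdorffEDist (A + C) (B + C)
  rcases eq_or_ne r ⊤ with hr | hr
  · exact hr ▸ le_top
  have hsub : A + C ⊆ Metric.cthickening r.toReal (B + C) := fun _ hx =>
    mem_cthickening_iff.2 <|
      (ENNReal.ofReal_toReal hr).symm ▸ infEDist_le_hausdorffEDist_of_mem hx
  simpa [ENNReal.ofReal_toReal hr] using mem_cthickening_iff.1 <|
    hB.subset_cthickening_of_add_subset_cthickening_add ENNReal.toReal_nonneg hC hCne hsub ha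

theorem Convex.hausdorffEDist_add_right_cancel (hA : Convex ℝ A) (hB : Convex ℝ B)
    (hC : Bornology.IsBounded C) (hCne : C.Nonempty) :
    hausdorffEDist (A + C) (B + C) = hausdorffEDist A B := by
  refine (hausdorffEDist_add_le A B C).antisymm <| hausdorffEDist_le_of_infEDist
    (fun _ ha => hB.infEDist_le_hausdorffEDist_add hC hCne ha) fun _ hb => ?_
  rw [hausdorffEDist_comm]
  exact hA.infEDist_le_hausdorffEDist_add hC hCne hb

end

theorem hausdorffDist_add_cancel_general {X : Type*} [NormedAddCommGroup X] [NormedSpace ℝ X]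
    (A B C : Set X) (hCne : C.Nonempty)
    (hCb : Bornology.IsBounded C) (hAc : Convex ℝ A) (hBc : Convex ℝ B) :
    hausdorffDist (A + C) (B + C) = hausdorffDist A B := by
  rw [hausdorffDist, hausdorffDist, hAc.hausdorffEDist_add_right_cancel hBc hCb hCne]

/-- For convex bounded nonempty subsets `A`, `B` of a normed space and any bounded
nonempty `C`, the Hausdorff distance satisfies `d_H(A + C, B + C) = d_H(A, B)`. -/
theorem hausdorffDist_add_cancel {X : Type*} [NormedAddCommGroup X] [NormedSpace ℝ X]
    (A B C : Set X) (hAne : A.Nonempty) (hBne : B.Nonempty) (hCne : C.Nonempty)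
    (hAb : Bornology.IsBounded A) (hBb : Bornology.IsBounded B)
    (hCb : Bornology.IsBounded C) (hAc : Convex ℝ A) (hBc : Convex ℝ B) :
    hausdorffDist (A + C) (B + C) = hausdorffDist A B :=
  hausdorffDist_add_cancel_general A B C hCne hCb hAc hBc
end

section
/- (Rådström cancellation) Let A, B, C be nonempty closed bounded convex subsets of a Banach space L. If closure(A + C) = closure(B + C), then A = B. -/
/-!
If `A + C ⊆ closure (B + C)` and `a ∈ A`, adding `a` repeatedly and using convexity of `B`
(`B + n • B = (n + 1) • B`) gives `n • a + C ⊆ closure (n • B + C)` for every `n ≥ 1`.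
So `n • a + c` is close to some `n • b + c'` with `b ∈ B`, `c' ∈ C`; dividing by `n`,
`a` lies within `diam C / n + ε` of `B`. Letting `n → ∞`, `a ∈ closure B = B`.
-/

open Pointwise

theorem add_closure_subset_closure_add {G : Type*} [AddMonoid G] [TopologicalSpace G]
    [ContinuousAdd G] (s t : Set G) : s + closure t ⊆ closure (s + t) :=
  set_vadd_closure_subset s t

theorem Convex.natCast_succ_smul {E : Type*} [AddCommGroup E] [Module ℝ E] {B : Set E}
    (hB : Convex ℝ B) (n : ℕ) : ((n + 1 : ℕ) : ℝ) • B = B + (n : ℝ) • B := by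
  rw [Nat.cast_succ, add_comm (n : ℝ), hB.add_smul zero_le_one n.cast_nonneg, one_smul]

theorem singleton_natCast_smul_add_subset_closure {E : Type*} [AddCommGroup E] [Module ℝ E]
    [TopologicalSpace E] [ContinuousAdd E] {B C : Set E} (hB : Convex ℝ B) {a : E}
    (h : {a} + C ⊆ closure (B + C)) {n : ℕ} (hn : 0 < n) :
    {(n : ℝ) • a} + C ⊆ closure ((n : ℝ) • B + C) := by
  induction n, hn using Nat.le_induction with
  | base => simpa using h
  | succ n _ ih =>
    calc {((n + 1 : ℕ) : ℝ) • a} + C = {(n : ℝ) • a} + ({a} + C) := by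
          rw [← add_assoc, Set.singleton_add_singleton, Nat.cast_succ, add_smul, one_smul]
      _ ⊆ closure ({(n : ℝ) • a} + (B + C)) :=
          (Set.add_subset_add_left h).trans (add_closure_subset_closure_add _ _)
      _ = closure (B + ({(n : ℝ) • a} + C)) := by rw [add_left_comm]
      _ ⊆ closure (B + closure ((n : ℝ) • B + C)) := closure_mono (Set.add_subset_add_left ih)
      _ ⊆ closure (((n + 1 : ℕ) : ℝ) • B + C) := by
          rw [hB.natCast_succ_smul, add_assoc]
          exact closure_minimal (add_closure_subset_closure_add _ _) isClosed_closure

theorem mem_closure_of_natCast_smul_add_mem_closure {E : Type*} [NormedAddCommGroup E]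
    [NormedSpace ℝ E] {B C : Set E} (hC : Bornology.IsBounded C) {a c : E} (hc : c ∈ C)
    (h : ∀ n : ℕ, 0 < n → (n : ℝ) • a + c ∈ closure ((n : ℝ) • B + C)) : a ∈ closure B := by
  refine Metric.mem_closure_iff.2 fun ε hε ↦ ?_
  obtain ⟨n, hn⟩ := exists_nat_gt (2 * Metric.diam C / ε)
  have hn₀ : (0 : ℝ) < n := (div_nonneg (by positivity) hε.le).trans_lt hn
  have hdiam : Metric.diam C < n * ε / 2 := by
    rw [div_lt_iff₀ hε] at hn
    linarith
  obtain ⟨_, ⟨_, ⟨b, hb, rfl⟩, c', hc', rfl⟩, hdist⟩ :=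
    Metric.mem_closure_iff.1 (h n (mod_cast hn₀)) (n * ε / 2) (by positivity)
  refine ⟨b, hb, lt_of_mul_lt_mul_left ?_ hn₀.le⟩
  calc n * dist a b = ‖(n : ℝ) • (a - b)‖ := by rw [norm_smul, Real.norm_natCast, dist_eq_norm]
    _ = ‖((n : ℝ) • a + c - ((n : ℝ) • b + c')) + (c' - c)‖ := by congr 1; module
    _ ≤ dist ((n : ℝ) • a + c) ((n : ℝ) • b + c') + dist c' c := by
        rw [dist_eq_norm, dist_eq_norm]
        exact norm_add_le _ _
    _ < n * ε / 2 + n * ε / 2 :=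
        add_lt_add_of_lt_of_le hdist ((Metric.dist_le_diam_of_mem hC hc' hc).trans hdiam.le)
    _ = n * ε := add_halves _

theorem subset_of_add_subset_closure_add {E : Type*} [NormedAddCommGroup E] [NormedSpace ℝ E]
    {A B C : Set E} (hCne : C.Nonempty) (hCb : Bornology.IsBounded C) (hBcl : IsClosed B)
    (hBc : Convex ℝ B) (h : A + C ⊆ closure (B + C)) : A ⊆ B := by
  obtain ⟨c, hc⟩ := hCne
  intro a ha
  have hdil : ∀ n : ℕ, 0 < n → {(n : ℝ) • a} + C ⊆ closure ((n : ℝ) • B + C) :=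
    fun n ↦ singleton_natCast_smul_add_subset_closure hBc
      ((Set.add_subset_add_right (Set.singleton_subset_iff.2 ha)).trans h)
  rw [← hBcl.closure_eq]
  exact mem_closure_of_natCast_smul_add_mem_closure hCb hc
    fun n hn ↦ hdil n hn (Set.add_mem_add rfl hc)

theorem radstrom_cancellation_general {L : Type*} [NormedAddCommGroup L] [NormedSpace ℝ L]
    (A B C : Set L)
    (hCne : C.Nonempty)
    (hAcl : IsClosed A) (hBcl : IsClosed B)
    (hCb : Bornology.IsBounded C)
    (hAc : Convex ℝ A) (hBc : Convex ℝ B)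
    (h : closure (A + C) = closure (B + C)) : A = B :=
  (subset_of_add_subset_closure_add hCne hCb hBcl hBc (h ▸ subset_closure)).antisymm
    (subset_of_add_subset_closure_add hCne hCb hAcl hAc (h.symm ▸ subset_closure))

/-- Rådström cancellation: if `A`, `B`, `C` are nonempty closed bounded convex subsets
of a Banach space `L` and `closure (A + C) = closure (B + C)`, then `A = B`. -/
theorem radstrom_cancellation {L : Type*} [NormedAddCommGroup L] [NormedSpace ℝ L]
    [CompleteSpace L] (A B C : Set L)
    (hAne : A.Nonempty) (hBne : B.Nonempty) (hCne : C.Nonempty)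
    (hAcl : IsClosed A) (hBcl : IsClosed B) (hCcl : IsClosed C)
    (hAb : Bornology.IsBounded A) (hBb : Bornology.IsBounded B)
    (hCb : Bornology.IsBounded C)
    (hAc : Convex ℝ A) (hBc : Convex ℝ B) (hCc : Convex ℝ C)
    (h : closure (A + C) = closure (B + C)) : A = B :=
  radstrom_cancellation_general A B C hCne hAcl hBcl hCb hAc hBc h
end

section
/- Let cc(L) denote the nonempty compact convex subsets of a Banach space L. The function sending a pair (A,B) ∈ cc(L) × cc(L) to d_H(A,B) descends to a well-defined norm on the quotient vector space H(cc(L)) of pairs modulo the relation (A,B) ∼ (C,D) ⟺ A + D = B + C, with addition ⟨A,B⟩ + ⟨C,D⟩ = ⟨A+C, B+D⟩. In particular, if A + D = B + C then d_H(A, B) = d_H(C, D). -/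
open Metric Pointwise Bornology Filter

section Aux
variable {L : Type*} [NormedAddCommGroup L] [NormedSpace ℝ L]

lemma my_fin {A B : Set L} (hA : A.Nonempty) (hAb : IsBounded A)
    (hB : B.Nonempty) (hBb : IsBounded B) : EMetric.hausdorffEdist A B ≠ ⊤ :=
  hausdorffEdist_ne_top_of_nonempty_of_bounded hA hB hAb hBb

lemma my_infDist_add_le {B D : Set L} (hB : B.Nonempty) (hD : D.Nonempty) (a c : L) :
    infDist (a + c) (B + D) ≤ infDist a B + infDist c D := by
  refine le_of_forall_pos_le_add fun ε hε => ?_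
  obtain ⟨b, hb, hab⟩ := (infDist_lt_iff hB).1
    (lt_add_of_pos_right _ (half_pos hε) : infDist a B < infDist a B + ε/2)
  obtain ⟨d, hd, hcd⟩ := (infDist_lt_iff hD).1
    (lt_add_of_pos_right _ (half_pos hε) : infDist c D < infDist c D + ε/2)
  calc infDist (a + c) (B + D) ≤ dist (a + c) (b + d) :=
        infDist_le_dist_of_mem (Set.add_mem_add hb hd)
    _ ≤ dist a b + dist c d := dist_add_add_le a c b d
    _ ≤ infDist a B + infDist c D + ε := by linarith

lemma my_haus_add {A B C D : Set L}
    (hA : A.Nonempty) (hAc : IsCompact A) (hB : B.Nonempty) (hBc : IsCompact B)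
    (hC : C.Nonempty) (hCc : IsCompact C) (hD : D.Nonempty) (hDc : IsCompact D) :
    hausdorffDist (A + C) (B + D) ≤ hausdorffDist A B + hausdorffDist C D := by
  have finAB := my_fin hA hAc.isBounded hB hBc.isBounded
  have finCD := my_fin hC hCc.isBounded hD hDc.isBounded
  refine hausdorffDist_le_of_infDist
    (add_nonneg hausdorffDist_nonneg hausdorffDist_nonneg) ?_ ?_
  · rintro x hx
    obtain ⟨a, ha, c, hc, rfl⟩ := Set.mem_add.1 hx
    calc infDist (a + c) (B + D) ≤ infDist a B + infDist c D := my_infDist_add_le hB hD a c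
      _ ≤ _ := add_le_add (infDist_le_hausdorffDist_of_mem ha finAB)
          (infDist_le_hausdorffDist_of_mem hc finCD)
  · rintro x hx
    obtain ⟨b, hb, d, hd, rfl⟩ := Set.mem_add.1 hx
    calc infDist (b + d) (A + C) ≤ infDist b A + infDist d C := my_infDist_add_le hA hC b d
      _ ≤ hausdorffDist B A + hausdorffDist D C := add_le_add
            (infDist_le_hausdorffDist_of_mem hb (EMetric.hausdorffEdist_comm (s := A) ▸ finAB))
            (infDist_le_hausdorffDist_of_mem hd (EMetric.hausdorffEdist_comm (s := C) ▸ finCD))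
      _ = hausdorffDist A B + hausdorffDist C D := by
          rw [hausdorffDist_comm (s := B), hausdorffDist_comm (s := D)]

lemma my_cancel {A B X : Set L} (hBconv : Convex ℝ B) (hBcl : IsClosed B)
    (hX : X.Nonempty) (hXb : IsBounded X) (h : A + X ⊆ B + X) : A ⊆ B := by
  intro a ha
  obtain ⟨x₀, hx₀⟩ := hX
  obtain ⟨M, hM⟩ := isBounded_iff_forall_norm_le.1 hXb
  have key : ∀ x ∈ X, ∃ b ∈ B, ∃ x' ∈ X, a + x = b + x' := by
    intro x hx
    obtain ⟨b, hb, x', hx', he⟩ := Set.mem_add.1 (h (Set.add_mem_add ha hx))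
    exact ⟨b, hb, x', hx', he.symm⟩
  have main : ∀ n : ℕ, ∃ c ∈ B, ∃ x' ∈ X, ((n : ℝ) + 1) • a + x₀ = ((n : ℝ) + 1) • c + x' := by
    intro n
    induction n with
    | zero =>
      obtain ⟨b, hb, x', hx', he⟩ := key x₀ hx₀
      exact ⟨b, hb, x', hx', by simpa using he⟩
    | succ n ih =>
      obtain ⟨c, hc, x', hx', he⟩ := ih
      obtain ⟨b, hb, x'', hx'', he2⟩ := key x' hx'
      have h2 : (n : ℝ) + 2 ≠ 0 := by positivity
      refine ⟨(((n : ℝ) + 1) / ((n : ℝ) + 2)) • c + (1 / ((n : ℝ) + 2)) • b,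
        hBconv hc hb (by positivity) (by positivity) (by field_simp <;> ring), x'', hx'', ?_⟩
      have hcombo : (((n : ℕ) : ℝ) + 1 + 1) •
          ((((n : ℝ) + 1) / ((n : ℝ) + 2)) • c + (1 / ((n : ℝ) + 2)) • b)
          = ((n : ℝ) + 1) • c + b := by
        rw [smul_add, smul_smul, smul_smul]
        push_cast
        rw [show ((n : ℝ) + 1 + 1) * (((n : ℝ) + 1) / ((n : ℝ) + 2)) = (n : ℝ) + 1 by field_simp <;> ring,
          show ((n : ℝ) + 1 + 1) * (1 / ((n : ℝ) + 2)) = 1 by field_simp <;> ring, one_smul]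
      push_cast
      rw [hcombo]
      have : ((n : ℝ) + 1 + 1) • a + x₀ = (((n : ℝ) + 1) • a + x₀) + a := by
        rw [add_smul, one_smul]; abel
      rw [this, he]
      rw [show ((n : ℝ) + 1) • c + x' + a = ((n : ℝ) + 1) • c + (a + x') by abel, he2]
      abel
  have bound : ∀ n : ℕ, infDist a B ≤ 2 * M / ((n : ℝ) + 1) := by
    intro n
    obtain ⟨c, hc, x', hx', he⟩ := main n
    have hn : (0 : ℝ) < (n : ℝ) + 1 := by positivity
    have hac : a - c = (1 / ((n : ℝ) + 1)) • (x' - x₀) := by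
      have : ((n : ℝ) + 1) • (a - c) = x' - x₀ := by
        rw [smul_sub, sub_eq_sub_iff_add_eq_add, he, add_comm]
      rw [← this, smul_smul]
      rw [show (1 / ((n : ℝ) + 1)) * ((n : ℝ) + 1) = 1 by field_simp <;> ring, one_smul]
    calc infDist a B ≤ dist a c := infDist_le_dist_of_mem hc
      _ = ‖a - c‖ := dist_eq_norm a c
      _ = ‖x' - x₀‖ / ((n : ℝ) + 1) := by
          rw [hac, norm_smul]
          simp [abs_of_pos hn, div_eq_mul_inv, one_div, mul_comm]
      _ ≤ 2 * M / ((n : ℝ) + 1) := by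
          gcongr
          calc ‖x' - x₀‖ ≤ ‖x'‖ + ‖x₀‖ := norm_sub_le _ _
            _ ≤ M + M := add_le_add (hM x' hx') (hM x₀ hx₀)
            _ = 2 * M := by ring
  have h0 : infDist a B ≤ 0 := by
    have T : Tendsto (fun n : ℕ => 2 * M / ((n : ℝ) + 1)) atTop (nhds 0) := by
      have := tendsto_one_div_add_atTop_nhds_zero_nat.const_mul (2 * M)
      simpa [div_eq_mul_inv, mul_comm, one_div, mul_assoc] using this
    exact ge_of_tendsto' T bound
  have hBne : B.Nonempty := by
    obtain ⟨b, hb, _, _, _⟩ := key x₀ hx₀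
    exact ⟨b, hb⟩
  have := le_antisymm h0 infDist_nonneg
  rw [← mem_closure_iff_infDist_zero hBne] at this
  rwa [hBcl.closure_eq] at this

end Aux

section Aux2
variable {L : Type*} [NormedAddCommGroup L] [NormedSpace ℝ L]

lemma my_onesided {A B X : Set L} (hA : A.Nonempty) (hAc : IsCompact A)
    (hB : B.Nonempty) (hBc : IsCompact B) (hBconv : Convex ℝ B)
    (hX : X.Nonempty) (hXc : IsCompact X) :
    ∀ a ∈ A, infDist a B ≤ hausdorffDist (A + X) (B + X) := by
  set r := hausdorffDist (A + X) (B + X) with hr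
  have hr0 : 0 ≤ r := hausdorffDist_nonneg
  have fin : EMetric.hausdorffEdist (A + X) (B + X) ≠ ⊤ :=
    my_fin (hA.add hX) (hAc.add hXc).isBounded (hB.add hX) (hBc.add hXc).isBounded
  have hsub : A + X ⊆ (B + closedBall 0 r) + X := by
    intro z hz
    have h1 : infDist z (B + X) ≤ r := infDist_le_hausdorffDist_of_mem hz fin
    obtain ⟨y, hy, hdy⟩ := (hBc.add hXc).exists_infDist_eq_dist (hB.add hX) z
    have hzy : dist z y ≤ r := hdy ▸ h1
    have : z ∈ (B + X) + closedBall 0 r := by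
      refine Set.mem_add.2 ⟨y, hy, z - y, ?_, by abel⟩
      simpa [mem_closedBall_zero_iff, ← dist_eq_norm] using hzy
    rwa [add_right_comm] at this
  have hBall : IsClosed (B + closedBall (0:L) r) := by
    rw [hBc.add_closedBall_zero hr0]; exact isClosed_cthickening
  have hBallconv : Convex ℝ (B + closedBall (0:L) r) :=
    hBconv.add (convex_closedBall 0 r)
  have hAB := my_cancel hBallconv hBall hX hXc.isBounded hsub
  intro a ha
  obtain ⟨b, hb, v, hv, he⟩ := Set.mem_add.1 (hAB ha)
  calc infDist a B ≤ dist a b := infDist_le_dist_of_mem hb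
    _ = ‖v‖ := by rw [dist_eq_norm, ← he]; congr 1; abel
    _ ≤ r := mem_closedBall_zero_iff.1 hv

lemma my_translate {A B X : Set L} (hA : A.Nonempty) (hAc : IsCompact A) (hAconv : Convex ℝ A)
    (hB : B.Nonempty) (hBc : IsCompact B) (hBconv : Convex ℝ B)
    (hX : X.Nonempty) (hXc : IsCompact X) :
    hausdorffDist (A + X) (B + X) = hausdorffDist A B := by
  apply le_antisymm
  · simpa using my_haus_add hA hAc hB hBc hX hXc hX hXc
  · refine hausdorffDist_le_of_infDist hausdorffDist_nonneg
      (my_onesided hA hAc hB hBc hBconv hX hXc) fun b hb => ?_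
    have := my_onesided hB hBc hA hAc hAconv hX hXc b hb
    rwa [hausdorffDist_comm (s := B + X)] at this

lemma my_smul_le {t : ℝ} (ht : 0 < t) {A B : Set L} (hA : A.Nonempty) (hAc : IsCompact A)
    (hB : B.Nonempty) (hBc : IsCompact B) :
    hausdorffDist (t • A) (t • B) ≤ t * hausdorffDist A B := by
  have fin := my_fin hA hAc.isBounded hB hBc.isBounded
  have finBA := my_fin hB hBc.isBounded hA hAc.isBounded
  refine hausdorffDist_le_of_infDist (mul_nonneg ht.le hausdorffDist_nonneg) ?_ ?_
  · rintro x hx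
    obtain ⟨a, ha, rfl⟩ := Set.mem_smul_set.1 hx
    rw [infDist_smul₀ ht.ne' B a, Real.norm_of_nonneg ht.le]
    exact mul_le_mul_of_nonneg_left (infDist_le_hausdorffDist_of_mem ha fin) ht.le
  · rintro x hx
    obtain ⟨b, hb, rfl⟩ := Set.mem_smul_set.1 hx
    rw [infDist_smul₀ ht.ne' A b, Real.norm_of_nonneg ht.le, hausdorffDist_comm (s := A)]
    exact mul_le_mul_of_nonneg_left (infDist_le_hausdorffDist_of_mem hb finBA) ht.le

end Aux2



open Metric Pointwise

/-- The Hausdorff distance on pairs of nonempty compact convex subsets of a Banach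
space `L` descends to a well-defined norm on the Rådström quotient `H(cc(L))` of
pairs modulo `(A,B) ∼ (C,D) ↔ A + D = B + C`, with addition
`⟨A,B⟩ + ⟨C,D⟩ = ⟨A+C, B+D⟩` and scalar multiplication `t⟨A,B⟩ = ⟨tA,tB⟩` for `t ≥ 0`.
Stated on representatives: it is well defined (in particular, `A + D = B + C` implies
`d_H(A,B) = d_H(C,D)`), separates points, is positively homogeneous, and is subadditive
with respect to the quotient addition. -/
theorem radstrom_quotient_norm {L : Type*} [NormedAddCommGroup L] [NormedSpace ℝ L]
    [CompleteSpace L] :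
    (∀ A B C D : Set L,
      A.Nonempty → IsCompact A → Convex ℝ A →
      B.Nonempty → IsCompact B → Convex ℝ B →
      C.Nonempty → IsCompact C → Convex ℝ C →
      D.Nonempty → IsCompact D → Convex ℝ D →
      A + D = B + C → hausdorffDist A B = hausdorffDist C D) ∧
    (∀ A B : Set L,
      A.Nonempty → IsCompact A → Convex ℝ A →
      B.Nonempty → IsCompact B → Convex ℝ B →
      (hausdorffDist A B = 0 ↔ A = B)) ∧
    (∀ (t : ℝ), 0 ≤ t → ∀ A B : Set L,
      A.Nonempty → IsCompact A → Convex ℝ A →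
      B.Nonempty → IsCompact B → Convex ℝ B →
      hausdorffDist (t • A) (t • B) = t * hausdorffDist A B) ∧
    (∀ A B C D : Set L,
      A.Nonempty → IsCompact A → Convex ℝ A →
      B.Nonempty → IsCompact B → Convex ℝ B →
      C.Nonempty → IsCompact C → Convex ℝ C →
      D.Nonempty → IsCompact D → Convex ℝ D →
      hausdorffDist (A + C) (B + D) ≤ hausdorffDist A B + hausdorffDist C D) := by
  refine ⟨?_, ?_, ?_, ?_⟩
  · intro A B C D hA hAc hAv hB hBc hBv hC hCc hCv hD hDc hDv h
    calc hausdorffDist A B = hausdorffDist (A + D) (B + D) :=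
          (my_translate hA hAc hAv hB hBc hBv hD hDc).symm
      _ = hausdorffDist (C + B) (D + B) := by rw [h, add_comm B C, add_comm B D]
      _ = hausdorffDist C D := my_translate hC hCc hCv hD hDc hDv hB hBc
  · intro A B hA hAc _ hB hBc _
    exact hAc.isClosed.hausdorffDist_zero_iff_eq hBc.isClosed
      (my_fin hA hAc.isBounded hB hBc.isBounded)
  · intro t ht A B hA hAc _ hB hBc _
    rcases ht.eq_or_lt with rfl | ht
    · rw [Set.zero_smul_set hA, Set.zero_smul_set hB, zero_mul,
        Metric.hausdorffDist_self_zero]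
    · refine le_antisymm (my_smul_le ht hA hAc hB hBc) ?_
      have hsA : (t • A).Nonempty := hA.smul_set
      have hsB : (t • B).Nonempty := hB.smul_set
      have hsAc : IsCompact (t • A) := hAc.smul t
      have hsBc : IsCompact (t • B) := hBc.smul t
      have h2 := my_smul_le (inv_pos.2 ht) hsA hsAc hsB hsBc
      rw [inv_smul_smul₀ ht.ne' A, inv_smul_smul₀ ht.ne' B] at h2
      have := mul_le_mul_of_nonneg_left h2 ht.le
      rwa [← mul_assoc, mul_inv_cancel₀ ht.ne', one_mul] at this
  · intro A B C D hA hAc _ hB hBc _ hC hCc _ hD hDc _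
    exact my_haus_add hA hAc hB hBc hC hCc hD hDc
end

section
/- Let G be a compact topological group acting continuously on a Banach space L by affine transformations, and let Φ : L → C(G,L) be defined by Φ(x)(g) = g·x. Then the image Φ(L) is a closed subset of C(G,L) with the sup norm. -/
/-!
An element `F` of `C(G, L)` lies in the range of `Φ` exactly when `F g = g • F 1` for all `g`
(then `F = Φ (F 1)`). For each `g` both sides depend continuously on `F`, so the range is an
intersection of closed equalizers.
-/

namespace ContinuousMap

variable {M X : Type*} [Monoid M] [TopologicalSpace M] [TopologicalSpace X] [MulAction M X]

theorem isClosed_setOf_forall_apply_eq_smul_apply_one [T2Space X] [ContinuousConstSMul M X] :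
    IsClosed {F : C(M, X) | ∀ g, F g = g • F 1} := by
  simp only [Set.ofPred_forall]
  exact isClosed_iInter fun g =>
    isClosed_eq (continuous_eval_const g) ((continuous_const_smul g).comp (continuous_eval_const 1))

theorem range_eq_setOf_forall_apply_eq_smul_apply_one (Φ : X → C(M, X))
    (hΦ : ∀ (x : X) (g : M), Φ x g = g • x) :
    Set.range Φ = {F : C(M, X) | ∀ g, F g = g • F 1} := by
  ext F
  constructor
  · rintro ⟨x, rfl⟩ g
    rw [hΦ, hΦ, one_smul]
  · intro hF
    exact ⟨F 1, ext fun g => (hΦ _ g).trans (hF g).symm⟩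

end ContinuousMap

theorem Phi_range_closed_general {G L : Type*} [Group G] [TopologicalSpace G]
    [NormedAddCommGroup L]
    [MulAction G L] [ContinuousSMul G L]
    (Φ : L → C(G, L)) (hΦ : ∀ (x : L) (g : G), Φ x g = g • x) :
    IsClosed (Set.range Φ) := by
  rw [ContinuousMap.range_eq_setOf_forall_apply_eq_smul_apply_one Φ hΦ]
  exact ContinuousMap.isClosed_setOf_forall_apply_eq_smul_apply_one

/-- Let `G` be a compact topological group acting continuously on a Banach space `L`
by affine transformations, and let `Φ : L → C(G, L)` be defined by `Φ(x)(g) = g • x`.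
Then the image `Φ(L)` is a closed subset of `C(G, L)` with the sup norm. -/
theorem Phi_range_closed {G L : Type*} [Group G] [TopologicalSpace G] [IsTopologicalGroup G]
    [CompactSpace G] [NormedAddCommGroup L] [NormedSpace ℝ L] [CompleteSpace L]
    [MulAction G L] [ContinuousSMul G L]
    (haff : ∀ (g : G) (t : ℝ), t ∈ Set.Icc (0 : ℝ) 1 → ∀ x y : L,
      g • (t • x + (1 - t) • y) = t • (g • x) + (1 - t) • (g • y))
    (Φ : L → C(G, L)) (hΦ : ∀ (x : L) (g : G), Φ x g = g • x) :
    IsClosed (Set.range Φ) :=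
  Phi_range_closed_general Φ hΦ
end
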